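/- Let X be a locally compact Hausdorff space, Y a closed subset of X, A a C*-algebra, and I a closed two-sided ideal of A. Then, as subsets of C₀(X,A), { f ∈ C₀(X,A) : f(x) ∈ I for all x ∈ X } + { f ∈ C₀(X,A) : f(y) = 0 for all y ∈ Y } = { f ∈ C₀(X,A) : f(y) ∈ I for all y ∈ Y }. -/

import Mathlib

/-!
Only `⊇` needs an argument. Given `f` with `f(Y) ⊆ I` and `δ > 0`, take a partition of
unity on the compact set `{‖f‖ ≥ δ}` subordinate to `X \ Y` and to finitely many sets
`{‖f - f(y)‖ < δ}` with `y ∈ Y`. Then `∑ φ_y • f(y)` takes values in `I` (a closed ideal of a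
C⋆-algebra is closed under scalars, via an approximate unit) and `φ_∞ • f` vanishes on `Y`;
together they approximate `f` within `δ`. With `δ = ‖f‖ / 2` the error lies again in
`{f(Y) ⊆ I}`, so iterating yields two geometrically convergent series, whose sums lie in the
two closed summands and add up to `f`.
-/

open scoped ZeroAtInfty Pointwise
open Filter Topology Set

theorem Summable.hasSum_of_sub_succ {E : Type*} [AddCommGroup E] [TopologicalSpace E]
    [IsTopologicalAddGroup E] [T2Space E] {a u : ℕ → E} (ha : Summable a)
    (hu : ∀ n, u (n + 1) = u n - a n) (hlim : Tendsto u atTop (𝓝 0)) : HasSum a (u 0) := by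
  have hpartial : ∀ n, ∑ k ∈ Finset.range n, a k = u 0 - u n := by
    intro n
    induction n with
    | zero => simp
    | succ n ih => rw [Finset.sum_range_succ, ih, hu]; abel
  rw [ha.hasSum_iff_tendsto_nat]
  simpa [hpartial] using tendsto_const_nhds.sub hlim

theorem AddSubgroup.coe_add_eq_of_forall_exists_norm_sub_le {E : Type*} [NormedAddCommGroup E]
    [CompleteSpace E] {S T J : AddSubgroup E} (hS : IsClosed (S : Set E))
    (hT : IsClosed (T : Set E)) (hSJ : S ≤ J) (hTJ : T ≤ J) {C : ℝ} (hC : 0 ≤ C)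
    (happrox : ∀ u ∈ J, ∃ g ∈ S, ∃ h ∈ T, ‖u - (g + h)‖ ≤ ‖u‖ / 2 ∧ ‖h‖ ≤ C * ‖u‖) :
    (S : Set E) + T = J := by
  refine Subset.antisymm ?_ fun f hf => ?_
  · rintro _ ⟨g, hg, h, hh, rfl⟩
    exact J.add_mem (hSJ hg) (hTJ hh)
  choose! g hgS h hhT hsmall hbound using happrox
  set u : ℕ → E := fun n => (fun v => v - (g v + h v))^[n] f with hu
  have hu_succ : ∀ n, u (n + 1) = u n - (g (u n) + h (u n)) := fun n =>
    Function.iterate_succ_apply' _ n f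
  have hu_mem : ∀ n, u n ∈ J := by
    intro n
    induction n with
    | zero => exact hf
    | succ n ih =>
      rw [hu_succ]
      exact J.sub_mem ih (J.add_mem (hSJ (hgS _ ih)) (hTJ (hhT _ ih)))
  have hu_norm : ∀ n, ‖u n‖ ≤ ‖f‖ * (1 / 2) ^ n := by
    intro n
    induction n with
    | zero => simp [hu]
    | succ n ih =>
      rw [hu_succ, pow_succ]
      linarith [hsmall _ (hu_mem n)]
  have hh_norm : ∀ n, ‖h (u n)‖ ≤ C * (‖f‖ * (1 / 2) ^ n) := fun n =>
    (hbound _ (hu_mem n)).trans (mul_le_mul_of_nonneg_left (hu_norm n) hC)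
  have hg_norm : ∀ n, ‖g (u n)‖ ≤ (3 / 2 + C) * (‖f‖ * (1 / 2) ^ n) := by
    intro n
    have hg : g (u n) = (u n - h (u n)) - (u n - (g (u n) + h (u n))) := by abel
    calc ‖g (u n)‖ ≤ ‖u n‖ + ‖h (u n)‖ + ‖u n‖ / 2 := by
          rw [hg]
          exact (norm_sub_le _ _).trans (add_le_add (norm_sub_le _ _) (hsmall _ (hu_mem n)))
      _ ≤ (3 / 2 + C) * (‖f‖ * (1 / 2) ^ n) := by linarith [hu_norm n, hh_norm n]
  have hgeom : Summable fun n : ℕ => ‖f‖ * (1 / 2 : ℝ) ^ n :=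
    (summable_geometric_of_lt_one (by norm_num) (by norm_num)).mul_left _
  have hg_sum : Summable fun n => g (u n) := .of_norm_bounded (hgeom.mul_left _) hg_norm
  have hh_sum : Summable fun n => h (u n) := .of_norm_bounded (hgeom.mul_left _) hh_norm
  have hf_sum : HasSum (fun n => g (u n) + h (u n)) f :=
    (hg_sum.add hh_sum).hasSum_of_sub_succ hu_succ
      (squeeze_zero_norm hu_norm hgeom.tendsto_atTop_zero)
  rw [hf_sum.unique (hg_sum.hasSum.add hh_sum.hasSum)]
  exact add_mem_add (tsum_mem hS fun n => hgS _ (hu_mem n))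
    (tsum_mem hT fun n => hhT _ (hu_mem n))

theorem TwoSidedIdeal.smul_mem_of_isClosed {𝕜 A : Type*} [NonUnitalCStarAlgebra A] [SMul 𝕜 A]
    [IsScalarTower 𝕜 A A] [ContinuousConstSMul 𝕜 A] {I : TwoSidedIdeal A}
    (hI : IsClosed (I : Set A)) (c : 𝕜) {a : A} (ha : a ∈ I) : c • a ∈ I := by
  let _ := CStarAlgebra.spectralOrder A
  have := CStarAlgebra.spectralOrderedRing A
  refine hI.mem_of_tendsto
    (((CStarAlgebra.increasingApproximateUnit A).tendsto_mul_right a).const_smul c)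
    (Eventually.of_forall fun e => ?_)
  rw [← smul_mul_assoc]
  exact I.mul_mem_left _ _ ha

theorem norm_sub_sum_smul_le {ι E : Type*} [NormedAddCommGroup E] [NormedSpace ℝ E]
    (s : Finset ι) {φ : ι → ℝ} {v : E} {w : ι → E} {δ : ℝ} (hφ : ∀ i ∈ s, 0 ≤ φ i)
    (hφ_sum : ∑ i ∈ s, φ i ≤ 1) (hw : ∀ i ∈ s, φ i ≠ 0 → ‖v - w i‖ ≤ δ)
    (hv : ∑ i ∈ s, φ i = 1 ∨ ‖v‖ ≤ δ) :
    ‖v - ∑ i ∈ s, φ i • w i‖ ≤ δ := by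
  set σ := ∑ i ∈ s, φ i
  have hdecomp : v - ∑ i ∈ s, φ i • w i = (1 - σ) • v + ∑ i ∈ s, φ i • (v - w i) := by
    simp only [smul_sub, Finset.sum_sub_distrib, ← Finset.sum_smul, sub_smul, one_smul, σ]
    abel
  have hterm : ∀ i ∈ s, ‖φ i • (v - w i)‖ ≤ φ i * δ := by
    intro i hi
    rcases eq_or_ne (φ i) 0 with h0 | h0
    · simp [h0]
    · rw [norm_smul, Real.norm_of_nonneg (hφ i hi)]
      exact mul_le_mul_of_nonneg_left (hw i hi h0) (hφ i hi)
  calc ‖v - ∑ i ∈ s, φ i • w i‖ ≤ (1 - σ) * ‖v‖ + σ * δ := by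
        rw [hdecomp, Finset.sum_mul]
        refine (norm_add_le _ _).trans (add_le_add ?_ ?_)
        · rw [norm_smul, Real.norm_of_nonneg (sub_nonneg.2 hφ_sum)]
        · exact (norm_sum_le _ _).trans (Finset.sum_le_sum hterm)
    _ ≤ δ := by
        rcases hv with h | h
        · simp [h]
        · nlinarith [sub_nonneg.2 hφ_sum]

theorem PartitionOfUnity.exists_isSubordinate_compl_of_isClosed {X : Type*} [TopologicalSpace X]
    [LocallyCompactSpace X] [T2Space X] {K Y : Set X} (hK : IsCompact K) (hY : IsClosed Y)
    (V : X → Set X) (hV : ∀ y, IsOpen (V y)) (hVY : ∀ y ∈ Y, y ∈ V y) :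
    ∃ t : Finset X, ↑t ⊆ Y ∧ ∃ φ : PartitionOfUnity (Option t) X K,
      φ.IsSubordinate (fun i => i.elim Yᶜ fun y => V y) ∧ ∀ i, HasCompactSupport (φ i) := by
  obtain ⟨t, htY, hKY⟩ := (hK.inter_right hY).elim_nhds_subcover V
    fun y hy => (hV y).mem_nhds (hVY y hy.2)
  have hKU : K ⊆ ⋃ i : Option t, i.elim Yᶜ fun y => V y := by
    intro x hx
    by_cases hxY : x ∈ Y
    · obtain ⟨y, hy, hxy⟩ := mem_iUnion₂.1 (hKY ⟨hx, hxY⟩)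
      exact mem_iUnion.2 ⟨some ⟨y, hy⟩, hxy⟩
    · exact mem_iUnion.2 ⟨none, hxY⟩
  exact ⟨t, fun y hy => (htY y hy).2, exists_isSubordinate_of_locallyFinite_t2space hK _
    (fun i => i.rec hY.isOpen_compl fun y => hV y) (locallyFinite_of_finite _) hKU⟩

namespace ZeroAtInftyContinuousMap

variable {X A : Type*} [TopologicalSpace X] [NormedAddCommGroup A]

theorem norm_apply_le (f : C₀(X, A)) (x : X) : ‖f x‖ ≤ ‖f‖ :=
  norm_toBCF_eq_norm (f := f) ▸ f.toBCF.norm_coe_le_norm x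

theorem norm_le_of_forall_norm_apply_le {f : C₀(X, A)} {C : ℝ} (hC : 0 ≤ C)
    (h : ∀ x, ‖f x‖ ≤ C) : ‖f‖ ≤ C :=
  norm_toBCF_eq_norm (f := f) ▸ (BoundedContinuousFunction.norm_le hC).2 h

instance instContinuousEvalConst : ContinuousEvalConst C₀(X, A) X A :=
  .of_continuous_forget (isometry_toBCF (α := X) (β := A)).continuous

theorem isCompact_setOf_le_norm (f : C₀(X, A)) {δ : ℝ} (hδ : 0 < δ) :
    IsCompact {x | δ ≤ ‖f x‖} := by
  have hsmall : {x | ‖f x‖ < δ} ∈ cocompact X :=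
    (tendsto_zero_iff_norm_tendsto_zero.1 (zero_at_infty f)).eventually (gt_mem_nhds hδ)
  obtain ⟨K, hK, hsub⟩ := mem_cocompact'.1 hsmall
  refine hK.of_isClosed_subset (isClosed_le continuous_const (map_continuous f).norm) ?_
  intro x hx
  exact hsub (not_lt.2 hx : ¬ ‖f x‖ < δ)

variable {S : Type*} [SetLike S A] [AddSubgroupClass S A]

def mapsToAddSubgroup (Y : Set X) (s : S) : AddSubgroup C₀(X, A) where
  carrier := {f | ∀ y ∈ Y, f y ∈ s}
  add_mem' hf hg y hy := add_mem (hf y hy) (hg y hy)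
  zero_mem' _ _ := zero_mem s
  neg_mem' hf y hy := neg_mem (hf y hy)

@[simp]
theorem mem_mapsToAddSubgroup {Y : Set X} {s : S} {f : C₀(X, A)} :
    f ∈ mapsToAddSubgroup Y s ↔ ∀ y ∈ Y, f y ∈ s :=
  Iff.rfl

theorem isClosed_mapsToAddSubgroup (Y : Set X) {s : S} (hs : IsClosed (s : Set A)) :
    IsClosed (mapsToAddSubgroup Y s : Set C₀(X, A)) := by
  have : (mapsToAddSubgroup Y s : Set C₀(X, A)) = ⋂ y ∈ Y, (fun f : C₀(X, A) => f y) ⁻¹' s := by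
    ext; simp
  rw [this]
  exact isClosed_biInter fun y _ => hs.preimage (continuous_eval_const y)

theorem exists_norm_sub_add_le [LocallyCompactSpace X] [T2Space X] [NormedSpace ℝ A] {s : S}
    (hs : ∀ (r : ℝ) {a : A}, a ∈ s → r • a ∈ s) {Y : Set X} (hY : IsClosed Y) {u : C₀(X, A)}
    (hu : u ∈ mapsToAddSubgroup Y s) {δ : ℝ} (hδ : 0 < δ) :
    ∃ g ∈ mapsToAddSubgroup univ s, ∃ h ∈ mapsToAddSubgroup Y (⊥ : AddSubgroup A),
      ‖u - (g + h)‖ ≤ δ ∧ ‖h‖ ≤ ‖u‖ := by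
  obtain ⟨t, htY, φ, hφU, hφc⟩ :=
    PartitionOfUnity.exists_isSubordinate_compl_of_isClosed (u.isCompact_setOf_le_norm hδ) hY
      (fun y => {x | ‖u x - u y‖ < δ}) (fun y => isOpen_lt (by fun_prop) continuous_const)
      (fun y _ => by simpa using hδ)
  have hg : HasCompactSupport fun x => ∑ y : t, φ (some y) x • u y := by
    have heq : (fun x => ∑ y : t, φ (some y) x • u y) = ∑ y : t, ⇑(φ (some y)) • fun _ => u y := by
      funext x; simp [Finset.sum_apply]
    rw [heq]
    exact .finset_sum fun y _ => (hφc (some y)).smul_right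
  let g : C₀(X, A) := ⟨⟨fun x => ∑ y : t, φ (some y) x • u y, by fun_prop⟩, hg.is_zero_at_infty⟩
  let h : C₀(X, A) := ⟨⟨fun x => φ none x • u x, by fun_prop⟩,
    (hφc none).smul_right.is_zero_at_infty⟩
  refine ⟨g, fun x _ => sum_mem fun y _ => hs _ (hu y (htY y.2)), h, fun y hy => ?_, ?_, ?_⟩
  · rw [AddSubgroup.mem_bot]
    show φ none y • u y = 0
    rw [image_eq_zero_of_notMem_tsupport fun hy' => hφU none hy' hy, zero_smul]
  · refine norm_le_of_forall_norm_apply_le hδ.le fun x => ?_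
    have hx : (u - (g + h)) x = u x - ∑ i : Option t, φ i x • i.elim (u x) fun y => u y := by
      simp [Fintype.sum_option, g, h]
      abel
    rw [hx]
    refine norm_sub_sum_smul_le _ (fun i _ => φ.nonneg i x) ?_ ?_ ?_
    · exact (finsum_eq_sum_of_fintype _).symm.trans_le (φ.sum_le_one x)
    · rintro (_ | y) _ hne
      · simp [hδ.le]
      · exact (hφU (some y) (subset_tsupport _ hne)).le
    · by_cases hxK : δ ≤ ‖u x‖
      · exact .inl ((finsum_eq_sum_of_fintype _).symm.trans (φ.sum_eq_one hxK))
      · exact .inr (not_le.1 hxK).le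
  · refine norm_le_of_forall_norm_apply_le (norm_nonneg u) fun x => ?_
    show ‖φ none x • u x‖ ≤ ‖u‖
    rw [norm_smul, Real.norm_of_nonneg (φ.nonneg _ _)]
    exact (mul_le_of_le_one_left (norm_nonneg _) (φ.le_one _ _)).trans (u.norm_apply_le x)

end ZeroAtInftyContinuousMap

open ZeroAtInftyContinuousMap

/-- For a closed subset `Y ⊆ X` and a closed two-sided ideal `I` of `A`,
`{f : f(X) ⊆ I} + {f : f(Y) = {0}} = {f : f(Y) ⊆ I}` as subsets of `C₀(X, A)`.
(These correspond to `C₀(X) ⊗^min I + J(Y) ⊗^min A = {f : f(Y) ⊆ I}`.) -/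
theorem stmt3 {X A : Type*} [TopologicalSpace X] [LocallyCompactSpace X] [T2Space X]
    [NonUnitalNormedRing A] [StarRing A] [CStarRing A] [NormedSpace ℂ A]
    [IsScalarTower ℂ A A] [SMulCommClass ℂ A A] [StarModule ℂ A] [CompleteSpace A]
    (Y : Set X) (hY : IsClosed Y) (I : TwoSidedIdeal A) (hI : IsClosed (I : Set A)) :
    {f : C₀(X, A) | ∀ x, f x ∈ I} + {f : C₀(X, A) | ∀ y ∈ Y, f y = 0}
      = {f : C₀(X, A) | ∀ y ∈ Y, f y ∈ I} := by
  let _ : NonUnitalCStarAlgebra A := { }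
  have hsmul (r : ℝ) {a : A} (ha : a ∈ I) : r • a ∈ I := I.smul_mem_of_isClosed hI r ha
  have happrox : ∀ u ∈ mapsToAddSubgroup Y I, ∃ g ∈ mapsToAddSubgroup univ I,
      ∃ h ∈ mapsToAddSubgroup Y (⊥ : AddSubgroup A), ‖u - (g + h)‖ ≤ ‖u‖ / 2 ∧ ‖h‖ ≤ 1 * ‖u‖ := by
    intro u hu
    rcases eq_or_ne u 0 with rfl | hu0
    · exact ⟨0, zero_mem _, 0, zero_mem _, by simp⟩
    simp_rw [one_mul]
    exact exists_norm_sub_add_le hsmul hY hu (half_pos (norm_pos_iff.2 hu0))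
  have key := AddSubgroup.coe_add_eq_of_forall_exists_norm_sub_le (J := mapsToAddSubgroup Y I)
    (isClosed_mapsToAddSubgroup univ hI)
    (isClosed_mapsToAddSubgroup Y (s := (⊥ : AddSubgroup A)) (by simp))
    (fun _ hf y _ => hf y (mem_univ y)) (fun _ hf y hy => by simp [AddSubgroup.mem_bot.1 (hf y hy)])
    zero_le_one happrox
  convert key using 2 <;> ext f <;> simp
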